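/- Let p ≥ 1 linear maps f_i(x) = A_i x on ℝ^D and let K_0 be a nonempty compact subset of ℝ^D with well-defined renormalized orbit (K_n)_n and normalizing sequence (d_n)_n. Assume there exists d > 0 such that the sequence (H_d^n(K_0))_n, where H_d = (1/d)H, converges in the Hausdorff metric to a nonempty compact set L with ρ(L) ≠ 0. Then: (i) (d_n)_n converges to d and d ≤ σ_ℳ, the joint spectral radius of ℳ = {A_1,…,A_p}; (ii) (K_n)_n converges in the Hausdorff metric to K = (1/ρ(L)) L. -/

import Mathlib

open Metric Filter Pointwise Topology

noncomputable section

/-- The radius function `ρ(K) = sup {‖x‖ : x ∈ K}`. -/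
def rad {D : ℕ} (K : Set (EuclideanSpace ℝ (Fin D))) : ℝ := sSup (norm '' K)

/-- The Hutchinson operator `H(K) = ⋃ i, f i '' K`. -/
def hutch {D p : ℕ} (f : Fin (p + 1) → EuclideanSpace ℝ (Fin D) → EuclideanSpace ℝ (Fin D))
    (K : Set (EuclideanSpace ℝ (Fin D))) : Set (EuclideanSpace ℝ (Fin D)) := ⋃ i, f i '' K

/-- The renormalized Hutchinson operator `H_ρ(K) = ρ(H(K))⁻¹ • H(K)`. -/
def hutchRho {D p : ℕ} (f : Fin (p + 1) → EuclideanSpace ℝ (Fin D) → EuclideanSpace ℝ (Fin D))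
    (K : Set (EuclideanSpace ℝ (Fin D))) : Set (EuclideanSpace ℝ (Fin D)) :=
  (rad (hutch f K))⁻¹ • hutch f K

/-- The joint spectral radius
`σ_ℳ = limsup_n (sup over words of length n of ‖A_{i_1} ⋯ A_{i_n}‖)^(1/n)`. -/
def jsr {D p : ℕ} (A : Fin (p + 1) → EuclideanSpace ℝ (Fin D) →L[ℝ] EuclideanSpace ℝ (Fin D)) :
    ℝ :=
  Filter.limsup
    (fun n => (⨆ w : Fin n → Fin (p + 1), ‖(List.ofFn fun j => A (w j)).prod‖) ^ ((n : ℝ)⁻¹))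
    atTop

/-!
By linearity `H (c • K) = c • H K`, so `T n := H_d^n K₀ = d⁻ⁿ • Hⁿ K₀`, and from `n = 1` on the
renormalized orbit is the normalization `ρ(T n)⁻¹ • T n`. Since `ρ` is `1`-Lipschitz for the
Hausdorff distance, normalization is continuous at `L` when `ρ(L) ≠ 0`, which gives (ii), and
`d n = d ρ(T (n + 1)) / ρ(T n) → d`. Finally `ρ(Hⁿ K₀) = dⁿ ρ(T n) ≥ ρ(L) dⁿ / 2` eventually, while
`ρ(Hⁿ K₀)` is at most `ρ(K₀)` times the largest norm of a product of `n` of the `A i`; taking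
`n`-th roots gives `d ≤ σ_ℳ`.
-/

section HausdorffDist

lemma exists_dist_le_hausdorffDist_of_mem {α : Type*} [PseudoMetricSpace α] {s t : Set α} {x : α}
    (hx : x ∈ s) (ht : IsCompact t) (htne : t.Nonempty) (fin : hausdorffEDist s t ≠ ⊤) :
    ∃ y ∈ t, dist x y ≤ hausdorffDist s t := by
  obtain ⟨y, hy, hxy⟩ := ht.exists_infDist_eq_dist htne x
  exact ⟨y, hy, hxy ▸ infDist_le_hausdorffDist_of_mem hx fin⟩

variable {E : Type*} [NormedAddCommGroup E] [NormedSpace ℝ E] {s t : Set E}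

lemma hausdorffDist_smul_le (c : ℝ) (hs : IsCompact s) (hsne : s.Nonempty) (ht : IsCompact t)
    (htne : t.Nonempty) : hausdorffDist (c • s) (c • t) ≤ |c| * hausdorffDist s t := by
  have scaled : ∀ {s t : Set E}, IsCompact t → t.Nonempty → hausdorffEDist s t ≠ ⊤ →
      ∀ x ∈ s, ∃ y ∈ t, dist (c • x) (c • y) ≤ |c| * hausdorffDist s t := by
    intro s t ht htne fin x hx
    obtain ⟨y, hy, hxy⟩ := exists_dist_le_hausdorffDist_of_mem hx ht htne fin
    exact ⟨y, hy, by rw [dist_smul₀, Real.norm_eq_abs]; gcongr⟩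
  refine hausdorffDist_le_of_mem_dist (mul_nonneg (abs_nonneg c) hausdorffDist_nonneg) ?_ ?_
  · rintro - ⟨x, hx, rfl⟩
    obtain ⟨y, hy, hxy⟩ := scaled ht htne
      (hausdorffEDist_ne_top_of_nonempty_of_bounded hsne htne hs.isBounded ht.isBounded) x hx
    exact ⟨c • y, Set.smul_mem_smul_set hy, hxy⟩
  · rintro - ⟨y, hy, rfl⟩
    obtain ⟨x, hx, hyx⟩ := scaled hs hsne
      (hausdorffEDist_ne_top_of_nonempty_of_bounded htne hsne ht.isBounded hs.isBounded) y hy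
    exact ⟨c • x, Set.smul_mem_smul_set hx, hausdorffDist_comm (s := t) ▸ hyx⟩

end HausdorffDist

section Radius

variable {D : ℕ} {K L : Set (EuclideanSpace ℝ (Fin D))}

lemma rad_nonneg (K : Set (EuclideanSpace ℝ (Fin D))) : 0 ≤ rad K :=
  Real.sSup_nonneg (by rintro - ⟨x, -, rfl⟩; exact norm_nonneg x)

lemma norm_le_rad (hK : IsCompact K) {x : EuclideanSpace ℝ (Fin D)} (hx : x ∈ K) : ‖x‖ ≤ rad K :=
  le_csSup (hK.image continuous_norm).bddAbove ⟨x, hx, rfl⟩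

lemma rad_le (hne : K.Nonempty) {r : ℝ} (h : ∀ x ∈ K, ‖x‖ ≤ r) : rad K ≤ r :=
  csSup_le (hne.image _) (by rintro - ⟨x, hx, rfl⟩; exact h x hx)

lemma rad_smul (c : ℝ) (K : Set (EuclideanSpace ℝ (Fin D))) : rad (c • K) = |c| * rad K := by
  have : norm '' (c • K) = |c| • norm '' K := by
    rw [← Set.image_smul, Set.image_image, ← Set.image_smul, Set.image_image]
    simp only [norm_smul, Real.norm_eq_abs, smul_eq_mul]
  rw [rad, this, Real.sSup_smul_of_nonneg (abs_nonneg c), smul_eq_mul, rad]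

lemma rad_le_rad_add_hausdorffDist (hK : IsCompact K) (hKne : K.Nonempty) (hL : IsCompact L)
    (hLne : L.Nonempty) : rad K ≤ rad L + hausdorffDist K L := by
  refine rad_le hKne fun x hx => ?_
  obtain ⟨y, hy, hxy⟩ := exists_dist_le_hausdorffDist_of_mem hx hL hLne
    (hausdorffEDist_ne_top_of_nonempty_of_bounded hKne hLne hK.isBounded hL.isBounded)
  calc ‖x‖ ≤ ‖y‖ + dist x y := by rw [dist_eq_norm]; exact norm_le_norm_add_norm_sub' x y
    _ ≤ rad L + hausdorffDist K L := add_le_add (norm_le_rad hL hy) hxy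

lemma abs_rad_sub_rad_le_hausdorffDist (hK : IsCompact K) (hKne : K.Nonempty) (hL : IsCompact L)
    (hLne : L.Nonempty) : |rad K - rad L| ≤ hausdorffDist K L := by
  have hKL := rad_le_rad_add_hausdorffDist hK hKne hL hLne
  have hLK := rad_le_rad_add_hausdorffDist hL hLne hK hKne
  rw [hausdorffDist_comm] at hLK
  exact abs_sub_le_iff.2 ⟨by linarith, by linarith⟩

lemma hausdorffDist_smul_smul_le (b c : ℝ) (hL : IsCompact L) :
    hausdorffDist (b • L) (c • L) ≤ |b - c| * rad L := by
  have scaled : ∀ b c : ℝ, ∀ x ∈ b • L, ∃ y ∈ c • L, dist x y ≤ |b - c| * rad L := by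
    rintro b c - ⟨y, hy, rfl⟩
    refine ⟨c • y, Set.smul_mem_smul_set hy, ?_⟩
    rw [dist_eq_norm, ← sub_smul, norm_smul, Real.norm_eq_abs]
    gcongr
    exact norm_le_rad hL hy
  refine hausdorffDist_le_of_mem_dist (by positivity [rad_nonneg L]) (scaled b c) ?_
  simpa only [abs_sub_comm] using scaled c b

variable {ι : Type*} {l : Filter ι} {K : ι → Set (EuclideanSpace ℝ (Fin D))}

lemma tendsto_rad_of_tendsto_hausdorffDist (hK : ∀ i, IsCompact (K i))
    (hKne : ∀ i, (K i).Nonempty) (hL : IsCompact L) (hLne : L.Nonempty)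
    (h : Tendsto (fun i => hausdorffDist (K i) L) l (𝓝 0)) :
    Tendsto (fun i => rad (K i)) l (𝓝 (rad L)) := by
  rw [tendsto_iff_dist_tendsto_zero]
  refine squeeze_zero (fun _ => dist_nonneg) (fun i => ?_) h
  exact abs_rad_sub_rad_le_hausdorffDist (hK i) (hKne i) hL hLne

def radNormalize (K : Set (EuclideanSpace ℝ (Fin D))) : Set (EuclideanSpace ℝ (Fin D)) :=
  (rad K)⁻¹ • K

lemma radNormalize_smul {c : ℝ} (hc : 0 < c) (K : Set (EuclideanSpace ℝ (Fin D))) :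
    radNormalize (c • K) = radNormalize K := by
  rw [radNormalize, radNormalize, rad_smul, abs_of_pos hc, smul_smul, mul_inv, mul_right_comm,
    inv_mul_cancel₀ hc.ne', one_mul]

lemma tendsto_hausdorffDist_radNormalize (hK : ∀ i, IsCompact (K i))
    (hKne : ∀ i, (K i).Nonempty) (hL : IsCompact L) (hLne : L.Nonempty) (hradL : rad L ≠ 0)
    (h : Tendsto (fun i => hausdorffDist (K i) L) l (𝓝 0)) :
    Tendsto (fun i => hausdorffDist (radNormalize (K i)) (radNormalize L)) l (𝓝 0) := by
  have hinv : Tendsto (fun i => (rad (K i))⁻¹) l (𝓝 (rad L)⁻¹) :=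
    (tendsto_rad_of_tendsto_hausdorffDist hK hKne hL hLne h).inv₀ hradL
  have hbound : Tendsto (fun i => |(rad (K i))⁻¹| * hausdorffDist (K i) L
      + |(rad (K i))⁻¹ - (rad L)⁻¹| * rad L) l (𝓝 0) := by
    simpa using (hinv.abs.mul h).add ((hinv.sub_const (rad L)⁻¹).abs.mul_const (rad L))
  refine squeeze_zero (fun _ => hausdorffDist_nonneg) (fun i => ?_) hbound
  calc hausdorffDist (radNormalize (K i)) (radNormalize L)
      ≤ hausdorffDist ((rad (K i))⁻¹ • K i) ((rad (K i))⁻¹ • L)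
        + hausdorffDist ((rad (K i))⁻¹ • L) ((rad L)⁻¹ • L) :=
        hausdorffDist_triangle <| hausdorffEDist_ne_top_of_nonempty_of_bounded
          (hKne i).smul_set hLne.smul_set ((hK i).smul _).isBounded (hL.smul _).isBounded
    _ ≤ _ := add_le_add (hausdorffDist_smul_le _ (hK i) (hKne i) hL hLne)
        (hausdorffDist_smul_smul_le _ _ hL)

end Radius

section Hutchinson

variable {D p : ℕ} (A : Fin (p + 1) → EuclideanSpace ℝ (Fin D) →L[ℝ] EuclideanSpace ℝ (Fin D))
  {K : Set (EuclideanSpace ℝ (Fin D))}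

lemma hutch_smul (c : ℝ) (K : Set (EuclideanSpace ℝ (Fin D))) :
    hutch (fun i => A i) (c • K) = c • hutch (fun i => A i) K := by
  simp only [hutch, Set.smul_set_iUnion]
  refine Set.iUnion_congr fun i => ?_
  simp only [← Set.image_smul, Set.image_image, map_smul]

lemma IsCompact.hutch (hK : IsCompact K) : IsCompact (hutch (fun i => A i) K) :=
  isCompact_iUnion fun i => hK.image (A i).continuous

lemma Set.Nonempty.hutch {f : Fin (p + 1) → EuclideanSpace ℝ (Fin D) → EuclideanSpace ℝ (Fin D)}
    (hK : K.Nonempty) : (hutch f K).Nonempty :=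
  Set.nonempty_iUnion.2 ⟨0, hK.image (f 0)⟩

lemma iterate_smul_hutch (c : ℝ) (K : Set (EuclideanSpace ℝ (Fin D))) (n : ℕ) :
    (fun K => c • hutch (fun i => A i) K)^[n] K = c ^ n • (hutch fun i => A i)^[n] K := by
  induction n with
  | zero => simp
  | succ n ih =>
    rw [Function.iterate_succ_apply', Function.iterate_succ_apply', ih, hutch_smul, smul_smul,
      pow_succ']

lemma rad_hutch_radNormalize (K : Set (EuclideanSpace ℝ (Fin D))) :
    rad (hutch (fun i => A i) (radNormalize K)) = rad (hutch (fun i => A i) K) / rad K := by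
  rw [radNormalize, hutch_smul, rad_smul, abs_inv, abs_of_nonneg (rad_nonneg K), inv_mul_eq_div]

lemma hutchRho_smul {c : ℝ} (hc : 0 < c) (K : Set (EuclideanSpace ℝ (Fin D))) :
    hutchRho (fun i => A i) (c • K) = radNormalize (hutch (fun i => A i) K) := by
  rw [hutchRho, hutch_smul, ← radNormalize, radNormalize_smul hc]

lemma exists_pos_hutchRho_iterate_eq_smul (K₀ : Set (EuclideanSpace ℝ (Fin D)))
    (hpos : ∀ n, 0 < rad (hutch (fun i => A i) ((hutchRho fun i => A i)^[n] K₀))) (n : ℕ) :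
    ∃ c : ℝ, 0 < c ∧ (hutchRho fun i => A i)^[n] K₀ = c • (hutch fun i => A i)^[n] K₀ := by
  induction n with
  | zero => exact ⟨1, one_pos, by simp⟩
  | succ n ih =>
    obtain ⟨c, hc, hKn⟩ := ih
    have hrad := hpos n
    rw [hKn, hutch_smul, rad_smul, abs_of_pos hc, ← Function.iterate_succ_apply' (hutch _)]
      at hrad
    refine ⟨_, inv_pos.2 (pos_of_mul_pos_right hrad hc.le), ?_⟩
    rw [Function.iterate_succ_apply', hKn, hutchRho_smul A hc, radNormalize,
      ← Function.iterate_succ_apply' (hutch _)]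

lemma hutchRho_iterate_succ (K₀ : Set (EuclideanSpace ℝ (Fin D)))
    (hpos : ∀ n, 0 < rad (hutch (fun i => A i) ((hutchRho fun i => A i)^[n] K₀))) (n : ℕ) :
    (hutchRho fun i => A i)^[n + 1] K₀ = radNormalize ((hutch fun i => A i)^[n + 1] K₀) := by
  obtain ⟨c, hc, hKn⟩ := exists_pos_hutchRho_iterate_eq_smul A K₀ hpos n
  rw [Function.iterate_succ_apply', hKn, hutchRho_smul A hc, Function.iterate_succ_apply']

end Hutchinson

section JointSpectralRadius

lemma le_limsup_rpow_inv_of_eventually_le {u : ℕ → ℝ} {c d : ℝ} (hc : 0 < c) (hd : 0 ≤ d)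
    (h : ∀ᶠ n in atTop, c * d ^ n ≤ u n)
    (hu : IsBoundedUnder (· ≤ ·) atTop fun n => u n ^ (n : ℝ)⁻¹) :
    d ≤ limsup (fun n => u n ^ (n : ℝ)⁻¹) atTop := by
  have hlim : Tendsto (fun n : ℕ => c ^ (n : ℝ)⁻¹ * d) atTop (𝓝 d) := by
    simpa using ((Real.continuousAt_const_rpow hc.ne').tendsto.comp
      (tendsto_inv_atTop_zero.comp tendsto_natCast_atTop_atTop)).mul_const d
  rw [← hlim.limsup_eq]
  refine limsup_le_limsup ?_ hlim.isBoundedUnder_ge.isCoboundedUnder_le hu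
  filter_upwards [h, eventually_ne_atTop 0] with n hn hn0
  calc c ^ (n : ℝ)⁻¹ * d = (c * d ^ n) ^ (n : ℝ)⁻¹ := by
        rw [Real.mul_rpow hc.le (by positivity), Real.pow_rpow_inv_natCast hd hn0]
    _ ≤ u n ^ (n : ℝ)⁻¹ := Real.rpow_le_rpow (by positivity) hn (by positivity)

variable {D p : ℕ} (A : Fin (p + 1) → EuclideanSpace ℝ (Fin D) →L[ℝ] EuclideanSpace ℝ (Fin D))
  {K : Set (EuclideanSpace ℝ (Fin D))}

def wordNormSup (n : ℕ) : ℝ :=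
  ⨆ w : Fin n → Fin (p + 1), ‖(List.ofFn fun j => A (w j)).prod‖

lemma jsr_eq_limsup_wordNormSup :
    jsr A = limsup (fun n => wordNormSup A n ^ (n : ℝ)⁻¹) atTop := rfl

lemma norm_prod_ofFn_le_wordNormSup {n : ℕ} (w : Fin n → Fin (p + 1)) :
    ‖(List.ofFn fun j => A (w j)).prod‖ ≤ wordNormSup A n :=
  le_ciSup (f := fun w : Fin n → Fin (p + 1) => ‖(List.ofFn fun j => A (w j)).prod‖)
    (Set.finite_range _).bddAbove w

lemma wordNormSup_nonneg (n : ℕ) : 0 ≤ wordNormSup A n :=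
  (norm_nonneg _).trans (norm_prod_ofFn_le_wordNormSup A fun _ => 0)

lemma norm_prod_ofFn_le_pow {B : ℝ} (hB : ∀ i, ‖A i‖ ≤ B) :
    ∀ {n : ℕ} (w : Fin n → Fin (p + 1)), ‖(List.ofFn fun j => A (w j)).prod‖ ≤ B ^ n
  | 0, _ => by
    rw [List.ofFn_zero, List.prod_nil, pow_zero]
    exact ContinuousLinearMap.norm_id_le
  | n + 1, w => by
    rw [List.ofFn_succ, List.prod_cons, pow_succ']
    exact (norm_mul_le _ _).trans (mul_le_mul (hB _) (norm_prod_ofFn_le_pow hB _)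
      (norm_nonneg _) ((norm_nonneg _).trans (hB 0)))

lemma wordNormSup_le_pow {B : ℝ} (hB : ∀ i, ‖A i‖ ≤ B) (n : ℕ) : wordNormSup A n ≤ B ^ n :=
  ciSup_le fun w => norm_prod_ofFn_le_pow A hB w

lemma isBoundedUnder_wordNormSup_rpow_inv :
    IsBoundedUnder (· ≤ ·) atTop fun n => wordNormSup A n ^ (n : ℝ)⁻¹ := by
  have hB : ∀ i, ‖A i‖ ≤ ∑ j, ‖A j‖ := fun i =>
    Finset.single_le_sum (fun j _ => norm_nonneg (A j)) (Finset.mem_univ i)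
  refine ⟨∑ j, ‖A j‖, eventually_map.2 ?_⟩
  filter_upwards [eventually_ne_atTop 0] with n hn
  calc wordNormSup A n ^ (n : ℝ)⁻¹ ≤ ((∑ j, ‖A j‖) ^ n) ^ (n : ℝ)⁻¹ :=
        Real.rpow_le_rpow (wordNormSup_nonneg A n) (wordNormSup_le_pow A hB n) (by positivity)
    _ = ∑ j, ‖A j‖ := Real.pow_rpow_inv_natCast (by positivity) hn

lemma exists_eq_prod_ofFn_of_mem_hutch_iterate {n : ℕ} {x : EuclideanSpace ℝ (Fin D)}
    (hx : x ∈ (hutch fun i => A i)^[n] K) :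
    ∃ w : Fin n → Fin (p + 1), ∃ y ∈ K, x = (List.ofFn fun j => A (w j)).prod y := by
  induction n generalizing x with
  | zero => exact ⟨Fin.elim0, x, hx, by simp⟩
  | succ n ih =>
    rw [Function.iterate_succ_apply'] at hx
    obtain ⟨i, z, hz, rfl⟩ := Set.mem_iUnion.1 hx
    obtain ⟨w, y, hy, rfl⟩ := ih hz
    exact ⟨Fin.cons i w, y, hy, by simp [List.ofFn_succ]⟩

lemma rad_hutch_iterate_le (hK : IsCompact K) (hKne : K.Nonempty) (n : ℕ) :
    rad ((hutch fun i => A i)^[n] K) ≤ wordNormSup A n * rad K := by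
  refine rad_le (Function.Iterate.rec Set.Nonempty hKne (fun _ h => h.hutch) n) fun x hx => ?_
  obtain ⟨w, y, hy, rfl⟩ := exists_eq_prod_ofFn_of_mem_hutch_iterate A hx
  exact ((List.ofFn fun j => A (w j)).prod.le_opNorm y).trans <| mul_le_mul
    (norm_prod_ofFn_le_wordNormSup A w) (norm_le_rad hK hy) (norm_nonneg _)
    (wordNormSup_nonneg A n)

lemma le_jsr_of_eventually_le_rad (hK : IsCompact K) (hKne : K.Nonempty) {c d : ℝ} (hc : 0 < c)
    (hd : 0 < d) (h : ∀ᶠ n in atTop, c * d ^ n ≤ rad ((hutch fun i => A i)^[n] K)) :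
    d ≤ jsr A := by
  obtain ⟨n, hn⟩ := h.exists
  have hradK : 0 < rad K := pos_of_mul_pos_right
    ((mul_pos hc (pow_pos hd n)).trans_le (hn.trans (rad_hutch_iterate_le A hK hKne n)))
    (wordNormSup_nonneg A n)
  rw [jsr_eq_limsup_wordNormSup]
  refine le_limsup_rpow_inv_of_eventually_le (div_pos hc hradK) hd.le ?_
    (isBoundedUnder_wordNormSup_rpow_inv A)
  filter_upwards [h] with n hn
  rw [div_mul_eq_mul_div, div_le_iff₀ hradK]
  exact hn.trans (rad_hutch_iterate_le A hK hKne n)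

end JointSpectralRadius

/-- Proposition `prop:linred`. For a linear IFS, if the orbit of `K₀` under
`H_d = (1/d)H` converges to a nonempty compact `L` with `ρ(L) ≠ 0`, then `(d_n)` converges to
`d ≤ σ_ℳ` and the renormalized orbit `(K_n)` converges to `(1/ρ(L)) L`. -/
theorem stmt8 {D p : ℕ}
    (A : Fin (p + 1) → EuclideanSpace ℝ (Fin D) →L[ℝ] EuclideanSpace ℝ (Fin D))
    (f : Fin (p + 1) → EuclideanSpace ℝ (Fin D) → EuclideanSpace ℝ (Fin D))
    (hf : ∀ i x, f i x = A i x)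
    (K₀ : Set (EuclideanSpace ℝ (Fin D))) (hK₀c : IsCompact K₀) (hK₀ne : K₀.Nonempty)
    (hpos : ∀ n, 0 < rad (hutch f ((hutchRho f)^[n] K₀)))
    (d : ℝ) (hdpos : 0 < d)
    (L : Set (EuclideanSpace ℝ (Fin D))) (hLc : IsCompact L) (hLne : L.Nonempty)
    (hradL : rad L ≠ 0)
    (hconv : Tendsto
      (fun n => hausdorffDist ((fun K => d⁻¹ • hutch f K)^[n] K₀) L) atTop (𝓝 0)) :
    (Tendsto (fun n => rad (hutch f ((hutchRho f)^[n] K₀))) atTop (𝓝 d) ∧ d ≤ jsr A) ∧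
    Tendsto (fun n => hausdorffDist ((hutchRho f)^[n] K₀) ((rad L)⁻¹ • L)) atTop (𝓝 0) := by
  obtain rfl : f = fun i => ⇑(A i) := funext fun i => funext (hf i)
  set T : ℕ → Set (EuclideanSpace ℝ (Fin D)) :=
    fun n => (fun K => d⁻¹ • hutch (fun i => A i) K)^[n] K₀
  have hTc : ∀ n, IsCompact (T n) :=
    Function.Iterate.rec IsCompact hK₀c fun _ hK => (hK.hutch A).smul _
  have hTne : ∀ n, (T n).Nonempty :=
    Function.Iterate.rec Set.Nonempty hK₀ne fun _ hK => hK.hutch.smul_set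
  have hT : ∀ n, T n = (d ^ n)⁻¹ • (hutch fun i => A i)^[n] K₀ := fun n => by
    rw [← inv_pow, ← iterate_smul_hutch]
  have hρL : 0 < rad L := (rad_nonneg L).lt_of_ne' hradL
  have hradT := tendsto_rad_of_tendsto_hausdorffDist hTc hTne hLc hLne hconv
  have hKT : ∀ n, (hutchRho fun i => A i)^[n + 1] K₀ = radNormalize (T (n + 1)) := fun n => by
    rw [hutchRho_iterate_succ A K₀ hpos, hT, radNormalize_smul (by positivity)]
  refine ⟨⟨?_, ?_⟩, ?_⟩
  · have hdn : ∀ n, rad (hutch (fun i => A i) ((hutchRho fun i => A i)^[n + 1] K₀))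
        = d * rad (T (n + 2)) / rad (T (n + 1)) := fun n => by
      rw [hKT, rad_hutch_radNormalize, show T (n + 2) = d⁻¹ • hutch _ (T (n + 1)) from
        Function.iterate_succ_apply' _ _ _, rad_smul, abs_of_pos (inv_pos.2 hdpos),
        mul_inv_cancel_left₀ hdpos.ne']
    rw [← tendsto_add_atTop_iff_nat 1]
    simp_rw [hdn]
    simpa [hρL.ne', Function.comp_def, Pi.div_def] using
      ((hradT.comp (tendsto_add_atTop_nat 2)).const_mul d).div
        (hradT.comp (tendsto_add_atTop_nat 1)) hρL.ne'
  · refine le_jsr_of_eventually_le_rad A hK₀c hK₀ne (half_pos hρL) hdpos ?_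
    filter_upwards [hradT.eventually (eventually_ge_nhds (half_lt_self hρL))] with n hn
    rwa [hT, rad_smul, abs_inv, abs_of_pos (pow_pos hdpos n),
      le_inv_mul_iff₀ (pow_pos hdpos n), mul_comm] at hn
  · rw [← tendsto_add_atTop_iff_nat 1]
    simp_rw [hKT]
    exact (tendsto_hausdorffDist_radNormalize hTc hTne hLc hLne hradL hconv).comp
      (tendsto_add_atTop_nat 1)
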